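/- arXiv:2402.03573 — 2 statements merged into one kernel-verified Lean document; each statement's English description precedes it below -/
import Mathlib

section
/- Let p ≥ 3 be a prime, ζ ≠ 1 a (p-1)-st root of unity in Z_p, and define coefficients a_{m,k} by a_{0,0} = ζ/(1-ζ), a_{0,k} = p^k/(1-ζ)^{k+1} for k ≥ 1, and for m ≥ 1: a_{m,0} ∈ p^m Z_p and a_{m,k} = -(1/k) ∑_{j=0}^{k-1} (-p/ζ)^{k-j} a_{m-1,j} for k ≥ 1. Then for all m ≥ 0: v_p(a_{m,0}) ≥ m, and v_p(a_{m,k}) ≥ k - m⌊log_p(k)⌋ for all k ≥ 1. -/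
/-!
A root of unity ζ ≠ 1 of order prime to `p` is a unit of `ℤ_[p]`, and so is `1 - ζ`, since
otherwise `ζ ≡ 1 (mod p)` and the vanishing geometric sum `∑_{i<n} ζ^i` would give `n ≡ 0`.
Hence `‖-p/ζ‖ = p⁻¹` and `‖a_{0,k}‖ = p^{-k}`. The bound `‖a_{m,k}‖ ≤ p^{-(k - m log_p k)}` for all
`k` (at `k = 0` it only asks `‖a_{m,0}‖ ≤ 1`) then passes through the recursion: every summand
has norm at most `p^{-(k - m log_p k)}`, and dividing by `k` costs at most `p^{log_p k}`.
-/

open Finset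

namespace PadicInt

variable {p : ℕ} [Fact p.Prime]

theorem isUnit_one_sub_of_pow_eq_one {ζ : ℤ_[p]} {n : ℕ} (hn : (n : ZMod p) ≠ 0)
    (hζ : ζ ^ n = 1) (hζ1 : ζ ≠ 1) : IsUnit (1 - ζ) := by
  by_contra hunit
  have hζbar : toZMod ζ = 1 := by
    have hmem : 1 - ζ ∈ RingHom.ker (toZMod : ℤ_[p] →+* ZMod p) := by
      rw [ker_toZMod]
      exact hunit
    rw [RingHom.mem_ker, map_sub, map_one, sub_eq_zero] at hmem
    exact hmem.symm
  have hgeom : ∑ i ∈ range n, ζ ^ i = 0 := by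
    have h := geom_sum_mul ζ n
    rw [hζ, sub_self, mul_eq_zero, sub_eq_zero] at h
    exact h.resolve_right hζ1
  apply hn
  simpa [hζbar] using congrArg toZMod hgeom

theorem norm_one_sub_eq_one_of_pow_sub_one_eq_one {ζ : ℤ_[p]} (hζ : ζ ^ (p - 1) = 1)
    (hζ1 : ζ ≠ 1) : ‖1 - ζ‖ = 1 := by
  have hp : 1 ≤ p := (Fact.out : p.Prime).one_le
  have hn : ((p - 1 : ℕ) : ZMod p) ≠ 0 := by
    rw [Nat.cast_sub hp, ZMod.natCast_self, Nat.cast_one, zero_sub, neg_ne_zero]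
    exact one_ne_zero
  exact isUnit_iff.mp (isUnit_one_sub_of_pow_eq_one hn hζ hζ1)

end PadicInt

namespace Padic

variable {p : ℕ} [Fact p.Prime]

theorem norm_natCast_inv_le {k : ℕ} (hk : k ≠ 0) :
    ‖(k : ℚ_[p])‖⁻¹ ≤ (p : ℝ) ^ (Nat.log p k : ℤ) := by
  have hp : (1 : ℝ) ≤ p := by exact_mod_cast (Fact.out : p.Prime).one_le
  rw [norm_eq_zpow_neg_valuation (Nat.cast_ne_zero.mpr hk), valuation_natCast, ← zpow_neg,
    neg_neg]
  exact zpow_le_zpow_right₀ hp (by exact_mod_cast padicValNat_le_nat_log k)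

theorem norm_neg_inv_mul_sum_pow_mul_le {r : ℚ_[p]} (hr : ‖r‖ ≤ (p : ℝ)⁻¹) {b : ℕ → ℚ_[p]}
    {m k : ℕ} (hk : k ≠ 0) (hb : ∀ j < k, ‖b j‖ ≤ (p : ℝ) ^ (-((j : ℤ) - m * Nat.log p j))) :
    ‖-(1 / (k : ℚ_[p])) * ∑ j ∈ range k, r ^ (k - j) * b j‖ ≤
      (p : ℝ) ^ (-((k : ℤ) - (m + 1 : ℕ) * Nat.log p k)) := by
  have hp : (1 : ℝ) < p := by exact_mod_cast (Fact.out : p.Prime).one_lt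
  have hterm : ∀ j ∈ range k, ‖r ^ (k - j) * b j‖ ≤ (p : ℝ) ^ (-((k : ℤ) - m * Nat.log p k)) := by
    intro j hj
    have hjk : j ≤ k := (mem_range.mp hj).le
    calc ‖r ^ (k - j) * b j‖ = ‖r‖ ^ (k - j) * ‖b j‖ := by rw [norm_mul, norm_pow]
      _ ≤ (p : ℝ)⁻¹ ^ (k - j) * (p : ℝ) ^ (-((j : ℤ) - m * Nat.log p j)) := by
          gcongr
          exact hb j (mem_range.mp hj)
      _ = (p : ℝ) ^ (-((k : ℤ) - m * Nat.log p j)) := by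
          rw [inv_pow, ← zpow_natCast, ← zpow_neg, ← zpow_add₀ (by positivity)]
          push_cast [hjk]
          ring_nf
      _ ≤ (p : ℝ) ^ (-((k : ℤ) - m * Nat.log p k)) := by
          gcongr
          exact hp.le
  calc ‖-(1 / (k : ℚ_[p])) * ∑ j ∈ range k, r ^ (k - j) * b j‖
        = ‖(k : ℚ_[p])‖⁻¹ * ‖∑ j ∈ range k, r ^ (k - j) * b j‖ := by
          rw [norm_mul, norm_neg, one_div, norm_inv]
    _ ≤ (p : ℝ) ^ (Nat.log p k : ℤ) * (p : ℝ) ^ (-((k : ℤ) - m * Nat.log p k)) :=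
          mul_le_mul (norm_natCast_inv_le hk)
            (IsUltrametricDist.norm_sum_le_of_forall_le_of_nonneg (by positivity) hterm)
            (norm_nonneg _) (by positivity)
    _ = (p : ℝ) ^ (-((k : ℤ) - (m + 1 : ℕ) * Nat.log p k)) := by
          rw [← zpow_add₀ (by positivity)]
          push_cast
          ring_nf

end Padic

theorem stmt5_general (p : ℕ) [Fact p.Prime] (ζ : ℤ_[p])
    (hζ : ζ ^ (p - 1) = 1) (hζ1 : ζ ≠ 1)
    (a : ℕ → ℕ → ℚ_[p])
    (h00 : a 0 0 = (ζ : ℚ_[p]) / (1 - (ζ : ℚ_[p])))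
    (h0k : ∀ k, 1 ≤ k → a 0 k = (p : ℚ_[p]) ^ k / (1 - (ζ : ℚ_[p])) ^ (k + 1))
    (hm0 : ∀ m, 1 ≤ m → ‖a m 0‖ ≤ (p : ℝ) ^ (-(m : ℤ)))
    (hmk : ∀ m k, 1 ≤ m → 1 ≤ k → a m k =
      -(1 / (k : ℚ_[p])) * ∑ j ∈ Finset.range k,
        (-(p : ℚ_[p]) / (ζ : ℚ_[p])) ^ (k - j) * a (m - 1) j) :
    ∀ m : ℕ, ‖a m 0‖ ≤ (p : ℝ) ^ (-(m : ℤ)) ∧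
      ∀ k, 1 ≤ k → ‖a m k‖ ≤ (p : ℝ) ^ (-((k : ℤ) - m * Nat.log p k)) := by
  have hp : 2 ≤ p := (Fact.out : p.Prime).two_le
  have hζ_norm : ‖(ζ : ℚ_[p])‖ = 1 := by
    rw [← PadicInt.norm_def, ← PadicInt.isUnit_iff]
    exact IsUnit.of_pow_eq_one hζ (by omega)
  have h1ζ_norm : ‖1 - (ζ : ℚ_[p])‖ = 1 := by
    rw [← PadicInt.coe_one, ← PadicInt.coe_sub, ← PadicInt.norm_def]
    exact PadicInt.norm_one_sub_eq_one_of_pow_sub_one_eq_one hζ hζ1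
  have hratio : ‖-(p : ℚ_[p]) / ζ‖ ≤ (p : ℝ)⁻¹ := by
    rw [norm_div, norm_neg, Padic.norm_p, hζ_norm, div_one]
  have hbound : ∀ m k, ‖a m k‖ ≤ (p : ℝ) ^ (-((k : ℤ) - m * Nat.log p k)) := by
    intro m
    induction m with
    | zero =>
      intro k
      rcases Nat.eq_zero_or_pos k with rfl | hk
      · simp [h00, hζ_norm, h1ζ_norm]
      · simp [h0k k hk, h1ζ_norm]
    | succ m ih =>
      intro k
      rcases Nat.eq_zero_or_pos k with rfl | hk
      · simpa using (hm0 (m + 1) (by omega)).trans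
          (zpow_le_one_of_nonpos₀ (by exact_mod_cast (by omega : 1 ≤ p)) (by omega))
      · rw [hmk (m + 1) k (by omega) hk]
        exact Padic.norm_neg_inv_mul_sum_pow_mul_le hratio hk.ne' fun j _ ↦ ih j
  intro m
  refine ⟨?_, fun k _ ↦ hbound m k⟩
  rcases m with _ | m
  · simpa using hbound 0 0
  · exact hm0 (m + 1) (by omega)

/-- valuation bounds `v_p(a_{m,0}) ≥ m` and `v_p(a_{m,k}) ≥ k - m⌊log_p k⌋`
for the coefficients of the polylogarithm series `Li_m(ζ + pt) = ∑ a_{m,k} t^k`. -/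
theorem stmt5 (p : ℕ) [Fact p.Prime] (hp : 3 ≤ p) (ζ : ℤ_[p])
    (hζ : ζ ^ (p - 1) = 1) (hζ1 : ζ ≠ 1)
    (a : ℕ → ℕ → ℚ_[p])
    (h00 : a 0 0 = (ζ : ℚ_[p]) / (1 - (ζ : ℚ_[p])))
    (h0k : ∀ k, 1 ≤ k → a 0 k = (p : ℚ_[p]) ^ k / (1 - (ζ : ℚ_[p])) ^ (k + 1))
    (hm0 : ∀ m, 1 ≤ m → ‖a m 0‖ ≤ (p : ℝ) ^ (-(m : ℤ)))
    (hmk : ∀ m k, 1 ≤ m → 1 ≤ k → a m k =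
      -(1 / (k : ℚ_[p])) * ∑ j ∈ Finset.range k,
        (-(p : ℚ_[p]) / (ζ : ℚ_[p])) ^ (k - j) * a (m - 1) j) :
    ∀ m : ℕ, ‖a m 0‖ ≤ (p : ℝ) ^ (-(m : ℤ)) ∧
      ∀ k, 1 ≤ k → ‖a m k‖ ≤ (p : ℝ) ^ (-((k : ℤ) - m * Nat.log p k)) :=
  stmt5_general p ζ hζ hζ1 a h00 h0k hm0 hmk
end

section
/- Let f(t), f̃(t) ∈ Z_p[[t]] be power series converging on Z_p with f ≡ f̃ mod p^N Z_p[[t]] (all corresponding coefficients congruent mod p^N). Let a ∈ Z_p and d̃ = v_p(f̃'(a)). If 2d̃ < N and 2d̃ < v_p(f̃(a)), then f and f̃ each have a unique root α resp. α̃ in a + p^{d̃+1} Z_p, and these roots satisfy v_p(α - α̃) ≥ N - d̃. -/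
/-!
Everything rests on Hensel's lemma for restricted power series over `ℤ_p`. Such a series `f` is
`1`-Lipschitz and satisfies `‖f(y + h) - f(y) - f'(y) h‖ ≤ ‖h‖²`, since both hold for its
polynomial truncations. Consequently `‖f(α) - f(β)‖ = ‖f'(x)‖ ‖α - β‖` on the ball
`‖z - x‖ < ‖f'(x)‖`, which gives uniqueness of the root, and, applied to `f̃` at the roots `α` of
`f` and `α̃` of `f̃`, the bound `‖f̃'(x)‖ ‖α - α̃‖ = ‖f̃(α)‖ = ‖f̃(α) - f(α)‖ ≤ p^(-N)`.
Existence: the polynomial Hensel lemma applied to truncations yields points of the ball where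
`‖f‖` is arbitrarily small, and by compactness of the ball `‖f‖` attains its infimum there,
which must be `0`.
-/

open Filter Topology PowerSeries

noncomputable def PowerSeries.tsumEval {R : Type*} [CommSemiring R] [TopologicalSpace R]
    (f : R⟦X⟧) (y : R) : R :=
  ∑' k, coeff k f * y ^ k

namespace PadicInt

variable {p : ℕ} [Fact p.Prime]

lemma norm_mul_le_norm_left (u v : ℤ_[p]) : ‖u * v‖ ≤ ‖u‖ := by
  rw [norm_mul]
  exact mul_le_of_le_one_right (norm_nonneg u) (norm_le_one v)

lemma norm_sub_le_max (u v : ℤ_[p]) : ‖u - v‖ ≤ max ‖u‖ ‖v‖ := by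
  simpa only [sub_eq_add_neg, norm_neg] using nonarchimedean u (-v)

lemma norm_eq_of_norm_sub_lt {u v : ℤ_[p]} (h : ‖u - v‖ < ‖v‖) : ‖u‖ = ‖v‖ := by
  simpa [max_eq_right h.le] using norm_add_eq_max_of_ne h.ne

lemma sq_norm_le_norm (u : ℤ_[p]) : ‖u‖ ^ 2 ≤ ‖u‖ :=
  pow_le_of_le_one (norm_nonneg u) (norm_le_one u) two_ne_zero

lemma pos_of_norm_lt_sq {u v : ℤ_[p]} (h : ‖u‖ < ‖v‖ ^ 2) : 0 < ‖v‖ := by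
  nlinarith [norm_nonneg u, norm_nonneg v]

lemma norm_polynomial_eval_sub_eval_le (P : Polynomial ℤ_[p]) (y z : ℤ_[p]) :
    ‖P.eval y - P.eval z‖ ≤ ‖y - z‖ := by
  obtain ⟨t, ht⟩ := Polynomial.sub_dvd_eval_sub y z P
  rw [ht]
  exact norm_mul_le_norm_left _ _

lemma norm_polynomial_eval_add_sub_sub_le (P : Polynomial ℤ_[p]) (y h : ℤ_[p]) :
    ‖P.eval (y + h) - P.eval y - P.derivative.eval y * h‖ ≤ ‖h‖ ^ 2 := by
  obtain ⟨k, hk⟩ := P.binomExpansion y h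
  rw [hk, show ∀ u v w : ℤ_[p], u + v + w - u - v = w by intros; ring, mul_comm, ← norm_pow]
  exact norm_mul_le_norm_left _ _

variable {f g : ℤ_[p]⟦X⟧}

lemma isRestricted_one_iff : IsRestricted 1 f ↔ Tendsto (fun k => ‖coeff k f‖) atTop (𝓝 0) := by
  simp [isRestricted_iff']

lemma norm_coeff_derivative_le (f : ℤ_[p]⟦X⟧) (k : ℕ) :
    ‖coeff k (d⁄dX ℤ_[p] f)‖ ≤ ‖coeff (k + 1) f‖ := by
  rw [coeff_derivative]
  exact norm_mul_le_norm_left _ _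

lemma isRestricted_derivative (hf : IsRestricted 1 f) : IsRestricted 1 (d⁄dX ℤ_[p] f) := by
  rw [isRestricted_one_iff] at hf ⊢
  exact squeeze_zero (fun _ => norm_nonneg _) (norm_coeff_derivative_le f)
    (hf.comp (tendsto_add_atTop_nat 1))

lemma summable_coeff_mul_pow (hf : IsRestricted 1 f) (y : ℤ_[p]) :
    Summable fun k => coeff k f * y ^ k := by
  refine NonarchimedeanAddGroup.summable_of_tendsto_cofinite_zero ?_
  rw [Nat.cofinite_eq_atTop, tendsto_zero_iff_norm_tendsto_zero]
  exact squeeze_zero (fun _ => norm_nonneg _) (fun k => norm_mul_le_norm_left _ _)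
    (isRestricted_one_iff.1 hf)

lemma eval_trunc (f : ℤ_[p]⟦X⟧) (n : ℕ) (y : ℤ_[p]) :
    (trunc n f).eval y = ∑ k ∈ Finset.range n, coeff k f * y ^ k :=
  eval₂_trunc_eq_sum_range y (RingHom.id _) n f

lemma tendsto_eval_trunc (hf : IsRestricted 1 f) (y : ℤ_[p]) :
    Tendsto (fun n => (trunc n f).eval y) atTop (𝓝 (tsumEval f y)) := by
  simpa only [eval_trunc, tsumEval] using (summable_coeff_mul_pow hf y).hasSum.tendsto_sum_nat

lemma norm_tsumEval_le {r : ℝ} (h : ∀ k, ‖coeff k f‖ ≤ r) (y : ℤ_[p]) : ‖tsumEval f y‖ ≤ r :=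
  IsUltrametricDist.norm_tsum_le_of_forall_le_of_nonneg ((norm_nonneg _).trans (h 0))
    fun k => (norm_mul_le_norm_left _ _).trans (h k)

lemma norm_tsumEval_sub_eval_trunc_le (hf : IsRestricted 1 f) {n : ℕ} {r : ℝ} (hr : 0 ≤ r)
    (h : ∀ k, n ≤ k → ‖coeff k f‖ ≤ r) (y : ℤ_[p]) :
    ‖tsumEval f y - (trunc n f).eval y‖ ≤ r := by
  rw [tsumEval, ← (summable_coeff_mul_pow hf y).sum_add_tsum_nat_add n, eval_trunc,
    add_sub_cancel_left]
  exact IsUltrametricDist.norm_tsum_le_of_forall_le_of_nonneg hr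
    fun k => (norm_mul_le_norm_left _ _).trans (h _ (Nat.le_add_left n k))

lemma tsumEval_sub (hf : IsRestricted 1 f) (hg : IsRestricted 1 g) (y : ℤ_[p]) :
    tsumEval (f - g) y = tsumEval f y - tsumEval g y := by
  simp only [tsumEval, map_sub, sub_mul]
  exact (summable_coeff_mul_pow hf y).tsum_sub (summable_coeff_mul_pow hg y)

lemma norm_tsumEval_sub_tsumEval_le (hf : IsRestricted 1 f) (y z : ℤ_[p]) :
    ‖tsumEval f y - tsumEval f z‖ ≤ ‖y - z‖ :=
  le_of_tendsto' ((tendsto_eval_trunc hf y).sub (tendsto_eval_trunc hf z)).norm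
    fun _ => norm_polynomial_eval_sub_eval_le _ _ _

lemma norm_tsumEval_add_sub_sub_le (hf : IsRestricted 1 f) (y h : ℤ_[p]) :
    ‖tsumEval f (y + h) - tsumEval f y - tsumEval (d⁄dX ℤ_[p] f) y * h‖ ≤ ‖h‖ ^ 2 := by
  have hderiv : Tendsto (fun n => (trunc (n + 1) f).derivative.eval y) atTop
      (𝓝 (tsumEval (d⁄dX ℤ_[p] f) y)) := by
    simpa only [← trunc_derivative] using tendsto_eval_trunc (isRestricted_derivative hf) y
  have hshift (z : ℤ_[p]) := (tendsto_eval_trunc hf z).comp (tendsto_add_atTop_nat 1)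
  exact le_of_tendsto' (((hshift (y + h)).sub (hshift y)).sub (hderiv.mul_const h)).norm
    fun _ => norm_polynomial_eval_add_sub_sub_le _ _ _

lemma norm_tsumEval_sub_le (hf : IsRestricted 1 f) (hg : IsRestricted 1 g) {r : ℝ}
    (h : ∀ k, ‖coeff k f - coeff k g‖ ≤ r) (y : ℤ_[p]) :
    ‖tsumEval f y - tsumEval g y‖ ≤ r := by
  rw [← tsumEval_sub hf hg]
  exact norm_tsumEval_le (by simpa using h) y

lemma norm_tsumEval_derivative_sub_le (hf : IsRestricted 1 f) (hg : IsRestricted 1 g) {r : ℝ}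
    (h : ∀ k, ‖coeff k f - coeff k g‖ ≤ r) (y : ℤ_[p]) :
    ‖tsumEval (d⁄dX ℤ_[p] f) y - tsumEval (d⁄dX ℤ_[p] g) y‖ ≤ r := by
  rw [← tsumEval_sub (isRestricted_derivative hf) (isRestricted_derivative hg), ← map_sub]
  exact norm_tsumEval_le
    (fun k => (norm_coeff_derivative_le _ k).trans (by simpa using h (k + 1))) y

lemma norm_tsumEval_sub_tsumEval_eq (hf : IsRestricted 1 f) {x α β : ℤ_[p]}
    (hα : ‖α - x‖ < ‖tsumEval (d⁄dX ℤ_[p] f) x‖) (hβ : ‖β - x‖ < ‖tsumEval (d⁄dX ℤ_[p] f) x‖) :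
    ‖tsumEval f α - tsumEval f β‖ = ‖tsumEval (d⁄dX ℤ_[p] f) x‖ * ‖α - β‖ := by
  set D := ‖tsumEval (d⁄dX ℤ_[p] f) x‖
  rcases eq_or_ne α β with rfl | hne
  · simp
  have hDβ : ‖tsumEval (d⁄dX ℤ_[p] f) β‖ = D := norm_eq_of_norm_sub_lt
    ((norm_tsumEval_sub_tsumEval_le (isRestricted_derivative hf) β x).trans_lt hβ)
  have hαβ : ‖α - β‖ < D := by
    rw [← sub_sub_sub_cancel_right α β x]
    exact (norm_sub_le_max _ _).trans_lt (max_lt hα hβ)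
  have hpos : 0 < ‖α - β‖ := norm_pos_iff.2 (sub_ne_zero.2 hne)
  have htaylor := norm_tsumEval_add_sub_sub_le hf β (α - β)
  rw [add_sub_cancel] at htaylor
  rw [← hDβ, ← norm_mul]
  refine norm_eq_of_norm_sub_lt (htaylor.trans_lt ?_)
  rw [norm_mul, hDβ, sq]
  exact mul_lt_mul_of_pos_right hαβ hpos

lemma exists_norm_tsumEval_lt (hf : IsRestricted 1 f) {x : ℤ_[p]}
    (hx : ‖tsumEval f x‖ < ‖tsumEval (d⁄dX ℤ_[p] f) x‖ ^ 2) {ε : ℝ} (hε : 0 < ε) :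
    ∃ z, ‖z - x‖ < ‖tsumEval (d⁄dX ℤ_[p] f) x‖ ∧ ‖tsumEval f z‖ < ε := by
  set D := ‖tsumEval (d⁄dX ℤ_[p] f) x‖
  have hm : 0 < min ε (D ^ 2) := lt_min hε ((norm_nonneg _).trans_lt hx)
  -- The truncation error `δ` must stay below `D ^ 2` for the truncation to inherit the
  -- hypothesis of Hensel's lemma (with the same `‖P'(x)‖`), and below `ε` at its root.
  set δ := min ε (D ^ 2) / 2
  have hδ : 0 < δ := half_pos hm
  have hδε : δ < ε := (half_lt_self hm).trans_le (min_le_left _ _)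
  have hδD : δ < D ^ 2 := (half_lt_self hm).trans_le (min_le_right _ _)
  obtain ⟨n, hn⟩ := eventually_atTop.1
    ((isRestricted_one_iff.1 hf).eventually (ge_mem_nhds hδ))
  set P := trunc (n + 1) f
  have htail (y : ℤ_[p]) : ‖tsumEval f y - P.eval y‖ ≤ δ :=
    norm_tsumEval_sub_eval_trunc_le hf hδ.le (fun k hk => hn k (by omega)) y
  have hP' : ‖P.derivative.eval x‖ = D := by
    rw [← trunc_derivative]
    refine norm_eq_of_norm_sub_lt ?_
    rw [norm_sub_rev]
    refine (norm_tsumEval_sub_eval_trunc_le (isRestricted_derivative hf) hδ.le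
      (fun k hk => (norm_coeff_derivative_le f k).trans (hn _ (by omega))) x).trans_lt ?_
    exact hδD.trans_le (sq_norm_le_norm _)
  have hPx : ‖P.eval x‖ < ‖P.derivative.eval x‖ ^ 2 := by
    rw [hP', ← sub_sub_self (tsumEval f x) (P.eval x)]
    exact (norm_sub_le_max _ _).trans_lt (max_lt hx ((htail x).trans_lt hδD))
  obtain ⟨z, hz, hzx, -⟩ := hensels_lemma hPx
  simp only [Polynomial.coe_aeval_eq_eval] at hz hzx
  refine ⟨z, hP' ▸ hzx, ?_⟩
  simpa [hz] using (htail z).trans_lt hδε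

theorem exists_unique_tsumEval_eq_zero (hf : IsRestricted 1 f) {x : ℤ_[p]}
    (hx : ‖tsumEval f x‖ < ‖tsumEval (d⁄dX ℤ_[p] f) x‖ ^ 2) :
    ∃! α, tsumEval f α = 0 ∧ ‖α - x‖ < ‖tsumEval (d⁄dX ℤ_[p] f) x‖ := by
  set D := ‖tsumEval (d⁄dX ℤ_[p] f) x‖
  have hD : 0 < D := pos_of_norm_lt_sq hx
  have hcont : Continuous fun z => ‖tsumEval f z‖ :=
    (LipschitzWith.of_dist_le_mul (K := 1) fun y z => by
      simpa [dist_eq_norm] using norm_tsumEval_sub_tsumEval_le hf y z).continuous.norm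
  obtain ⟨α, hα, hmin⟩ := (IsUltrametricDist.isClosed_ball x D).isCompact.exists_isMinOn
    ⟨x, Metric.mem_ball_self hD⟩ hcont.continuousOn
  rw [Metric.mem_ball, dist_eq_norm] at hα
  have hroot : tsumEval f α = 0 := by
    by_contra hne
    obtain ⟨z, hz, hlt⟩ := exists_norm_tsumEval_lt hf hx (norm_pos_iff.2 hne)
    exact (hmin (by simpa [dist_eq_norm] using hz)).not_gt hlt
  refine ⟨α, ⟨hroot, hα⟩, fun β ⟨hβ0, hβ⟩ => ?_⟩
  have h := norm_tsumEval_sub_tsumEval_eq hf hβ hα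
  rw [hβ0, hroot, sub_zero, norm_zero] at h
  exact sub_eq_zero.1 (norm_eq_zero.1 ((mul_eq_zero.1 h.symm).resolve_left hD.ne'))

end PadicInt

open PadicInt

/-- two power series `f ≡ f̃ mod p^N` converging on `ℤ_p`, with
`d̃ = v_p(f̃'(a))` satisfying `2d̃ < N` and `2d̃ < v_p(f̃(a))`, each have a unique root in
`a + p^(d̃+1)ℤ_p`, and these roots satisfy `v_p(α - α̃) ≥ N - d̃`. -/
theorem stmt7 (p : ℕ) [Fact p.Prime] (N : ℕ) (a b : ℕ → ℤ_[p])
    (hconva : Filter.Tendsto (fun k => ‖a k‖) Filter.atTop (nhds 0))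
    (hconvb : Filter.Tendsto (fun k => ‖b k‖) Filter.atTop (nhds 0))
    (hcong : ∀ k, ‖a k - b k‖ ≤ (p : ℝ) ^ (-(N : ℤ)))
    (F G G' : ℤ_[p] → ℤ_[p])
    (hF : ∀ y, F y = ∑' k : ℕ, a k * y ^ k)
    (hG : ∀ y, G y = ∑' k : ℕ, b k * y ^ k)
    (hG' : ∀ y, G' y = ∑' k : ℕ, ((k : ℤ_[p]) + 1) * b (k + 1) * y ^ k)
    (x : ℤ_[p])
    (hdN : (p : ℝ) ^ (-(N : ℤ)) < ‖G' x‖ ^ 2)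
    (hda : ‖G x‖ < ‖G' x‖ ^ 2) :
    (∃! α : ℤ_[p], F α = 0 ∧ ‖α - x‖ < ‖G' x‖) ∧
    (∃! β : ℤ_[p], G β = 0 ∧ ‖β - x‖ < ‖G' x‖) ∧
    ∀ α β : ℤ_[p], F α = 0 → ‖α - x‖ < ‖G' x‖ → G β = 0 → ‖β - x‖ < ‖G' x‖ →
      ‖α - β‖ ≤ (p : ℝ) ^ (-(N : ℤ)) / ‖G' x‖ := by
  have hf : IsRestricted 1 (mk a) := isRestricted_one_iff.2 (by simpa using hconva)
  have hg : IsRestricted 1 (mk b) := isRestricted_one_iff.2 (by simpa using hconvb)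
  obtain rfl : F = tsumEval (mk a) := funext fun y => by simp [hF, tsumEval]
  obtain rfl : G = tsumEval (mk b) := funext fun y => by simp [hG, tsumEval]
  obtain rfl : G' = tsumEval (d⁄dX ℤ_[p] (mk b)) :=
    funext fun y => by simp [hG', tsumEval, coeff_derivative, mul_comm]
  have hcoeff : ∀ k, ‖coeff k (mk a) - coeff k (mk b)‖ ≤ (p : ℝ) ^ (-(N : ℤ)) := by
    simpa using hcong
  have hND : (p : ℝ) ^ (-(N : ℤ)) < ‖tsumEval (d⁄dX ℤ_[p] (mk b)) x‖ :=
    hdN.trans_le (sq_norm_le_norm _)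
  have hF' : ‖tsumEval (d⁄dX ℤ_[p] (mk a)) x‖ = ‖tsumEval (d⁄dX ℤ_[p] (mk b)) x‖ :=
    norm_eq_of_norm_sub_lt ((norm_tsumEval_derivative_sub_le hf hg hcoeff x).trans_lt hND)
  have hFx : ‖tsumEval (mk a) x‖ < ‖tsumEval (d⁄dX ℤ_[p] (mk a)) x‖ ^ 2 := by
    rw [hF', ← sub_sub_self (tsumEval (mk b) x) (tsumEval (mk a) x)]
    refine (norm_sub_le_max _ _).trans_lt (max_lt hda ?_)
    rw [norm_sub_rev]
    exact (norm_tsumEval_sub_le hf hg hcoeff x).trans_lt hdN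
  refine ⟨hF' ▸ exists_unique_tsumEval_eq_zero hf hFx, exists_unique_tsumEval_eq_zero hg hda,
    fun α β hα hαx hβ hβx => ?_⟩
  rw [le_div_iff₀ (pos_of_norm_lt_sq hda), mul_comm]
  calc ‖tsumEval (d⁄dX ℤ_[p] (mk b)) x‖ * ‖α - β‖
      = ‖tsumEval (mk b) α - tsumEval (mk b) β‖ := (norm_tsumEval_sub_tsumEval_eq hg hαx hβx).symm
    _ = ‖tsumEval (mk a) α - tsumEval (mk b) α‖ := by rw [hα, hβ, zero_sub, sub_zero, norm_neg]
    _ ≤ (p : ℝ) ^ (-(N : ℤ)) := norm_tsumEval_sub_le hf hg hcoeff α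
end
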